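/- arXiv:1703.02916 — 5 statements merged into one kernel-verified Lean document; each statement's English description precedes it below -/
import Mathlib

section
/- Let m₁ ≥ 1 and m₂ ≥ 0 be integers, ρ = m₁/2 + m₂, λ ∈ ℂ, and 0 < T < ∞. Then every twice continuously differentiable function q : (0,T) → ℂ satisfying q''(t) + (m₁·coth(t) + 2m₂·coth(2t))·q'(t) + (ρ² − λ²)·q(t) = 0 for all t ∈ (0,T) has the property that the function t ↦ q(t)·(2·sinh t)^{m₁}·(2·sinh 2t)^{m₂} is Lebesgue (Bochner) integrable on (0,T). -/
open Set Filter Topology MeasureTheory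

noncomputable section

/-- `ρ = m₁/2 + m₂`. -/
def rho (m₁ m₂ : ℕ) : ℝ := m₁ / 2 + m₂

/-- The hyperbolic cotangent. -/
def cothR (t : ℝ) : ℝ := Real.cosh t / Real.sinh t

/-- The radial eigenvalue equation in the variable `t`:
`q'' + (m₁ coth t + 2m₂ coth 2t) q' + (ρ² − λ²) q = 0`. -/
def RadialODEt (m₁ m₂ : ℕ) (lam : ℂ) (q : ℝ → ℂ) (t : ℝ) : Prop :=
  deriv (deriv q) t + ((m₁ * cothR t + 2 * m₂ * cothR (2 * t) : ℝ) : ℂ) * deriv q t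
    + ((rho m₁ m₂ : ℂ) ^ 2 - lam ^ 2) * q t = 0

/-!
Write `w = (2 sinh t)^m₁ (2 sinh 2t)^m₂`, so that `w' = b w` with the drift
`b = m₁ coth t + 2 m₂ coth 2t ≥ 0`, and let `E = |q|² + |q'|²`. Since `q'' + b q' = -c q` with
`c = ρ² - λ²`, Cauchy–Schwarz gives `-(2b + κ) E ≤ E' ≤ κ E` for `κ = 2 + |c|²`. Hence
`w² e^{κt} E` is nondecreasing and `e^{-κt} E` is nonincreasing on `(0, T)`. Comparing with a
fixed point `s`, the first bounds `w² E` on `(0, s]` and the second on `[s, T)`, so `q w` is a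
bounded continuous function on a bounded interval.
-/

open scoped RealInnerProductSpace

lemma cothR_nonneg {t : ℝ} (ht : 0 ≤ t) : 0 ≤ cothR t :=
  div_nonneg (Real.cosh_pos t).le (Real.sinh_nonneg_iff.2 ht)

lemma hasDerivAt_two_sinh_pow (m : ℕ) {x : ℝ} (hx : x ≠ 0) :
    HasDerivAt (fun t => (2 * Real.sinh t) ^ m) (m * cothR x * (2 * Real.sinh x) ^ m) x := by
  have hs : Real.sinh x ≠ 0 := Real.sinh_ne_zero.2 hx
  refine (((Real.hasDerivAt_sinh x).const_mul 2).pow m).congr_deriv ?_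
  rcases m with _ | m
  · simp
  · simp only [cothR, pow_succ, Nat.cast_add, Nat.cast_one, Nat.add_sub_cancel]
    field_simp

def radialWeight (m₁ m₂ : ℕ) (t : ℝ) : ℝ := (2 * Real.sinh t) ^ m₁ * (2 * Real.sinh (2 * t)) ^ m₂

def radialDrift (m₁ m₂ : ℕ) (t : ℝ) : ℝ := m₁ * cothR t + 2 * m₂ * cothR (2 * t)

lemma radialDrift_nonneg (m₁ m₂ : ℕ) {t : ℝ} (ht : 0 ≤ t) : 0 ≤ radialDrift m₁ m₂ t := by
  have := cothR_nonneg ht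
  have := cothR_nonneg (by linarith : 0 ≤ 2 * t)
  unfold radialDrift
  positivity

lemma radialWeight_nonneg (m₁ m₂ : ℕ) {t : ℝ} (ht : 0 ≤ t) : 0 ≤ radialWeight m₁ m₂ t := by
  have : 0 ≤ 2 * t := by linarith
  unfold radialWeight
  positivity

lemma monotoneOn_radialWeight (m₁ m₂ : ℕ) : MonotoneOn (radialWeight m₁ m₂) (Ici 0) := by
  intro s (hs : 0 ≤ s) t (ht : 0 ≤ t) hst
  have : 0 ≤ 2 * s := by linarith
  unfold radialWeight
  gcongr <;> first | positivity | exact Real.sinh_le_sinh.2 (by linarith)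

lemma continuous_radialWeight (m₁ m₂ : ℕ) : Continuous (radialWeight m₁ m₂) := by
  unfold radialWeight; fun_prop

lemma hasDerivAt_radialWeight (m₁ m₂ : ℕ) {t : ℝ} (ht : t ≠ 0) :
    HasDerivAt (radialWeight m₁ m₂) (radialDrift m₁ m₂ t * radialWeight m₁ m₂ t) t := by
  have h2t : HasDerivAt (fun t : ℝ => 2 * t) 2 t := by simpa using (hasDerivAt_id t).const_mul 2
  have := (hasDerivAt_two_sinh_pow m₁ ht).mul
    ((hasDerivAt_two_sinh_pow m₂ (mul_ne_zero two_ne_zero ht)).comp t h2t)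
  refine this.congr_deriv ?_
  simp only [radialDrift, radialWeight, Function.comp_apply]
  ring

lemma monotoneOn_mul_of_hasDerivAt {I : Set ℝ} (hI : IsOpen I) (hIc : Convex ℝ I)
    {f f' φ a : ℝ → ℝ} (hf : ∀ x ∈ I, HasDerivAt f (f' x) x)
    (hφ : ∀ x ∈ I, HasDerivAt φ (a x * φ x) x) (hφ₀ : ∀ x ∈ I, 0 ≤ φ x)
    (hf' : ∀ x ∈ I, -(a x * f x) ≤ f' x) :
    MonotoneOn (fun x => φ x * f x) I := by
  refine monotoneOn_of_hasDerivWithinAt_nonneg hIc (f' := fun x => a x * φ x * f x + φ x * f' x)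
    (fun x hx => ((hφ x hx).mul (hf x hx)).continuousAt.continuousWithinAt) ?_ ?_
  · rw [hI.interior_eq]
    exact fun x hx => ((hφ x hx).mul (hf x hx)).hasDerivWithinAt
  · rw [hI.interior_eq]
    intro x hx
    have := mul_nonneg (hφ₀ x hx) (neg_le_iff_add_nonneg.1 (hf' x hx))
    linarith

lemma antitoneOn_mul_of_hasDerivAt {I : Set ℝ} (hI : IsOpen I) (hIc : Convex ℝ I)
    {f f' φ a : ℝ → ℝ} (hf : ∀ x ∈ I, HasDerivAt f (f' x) x)
    (hφ : ∀ x ∈ I, HasDerivAt φ (a x * φ x) x) (hφ₀ : ∀ x ∈ I, 0 ≤ φ x)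
    (hf' : ∀ x ∈ I, f' x ≤ -(a x * f x)) :
    AntitoneOn (fun x => φ x * f x) I := by
  have := monotoneOn_mul_of_hasDerivAt hI hIc (fun x hx => (hf x hx).neg) hφ hφ₀
    (fun x hx => by simp only [Pi.neg_apply]; linarith [hf' x hx])
  intro x hx y hy hxy
  simpa using this hx hy hxy

lemma hasDerivAt_exp_const_mul (c t : ℝ) :
    HasDerivAt (fun t => Real.exp (c * t)) (c * Real.exp (c * t)) t := by
  simpa [mul_comm] using ((hasDerivAt_id' t).const_mul c).exp

section Energy

variable {V : Type*} [NormedAddCommGroup V] [InnerProductSpace ℝ V]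

lemma inner_eq_inner_add_smul_sub (p r : V) (b : ℝ) :
    ⟪p, r⟫ = ⟪p, r + b • p⟫ - b * ‖p‖ ^ 2 := by
  rw [inner_add_right, real_inner_smul_right, real_inner_self_eq_norm_sq]; ring

lemma two_inner_add_two_inner_le_of_norm_add_smul_le {q p r : V} {b K : ℝ} (hb : 0 ≤ b)
    (hr : ‖r + b • p‖ ≤ K * ‖q‖) :
    2 * ⟪q, p⟫ + 2 * ⟪p, r⟫ ≤ (2 + K ^ 2) * (‖q‖ ^ 2 + ‖p‖ ^ 2) := by
  have hqp := real_inner_le_norm q p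
  have hpr := (real_inner_le_norm p _).trans (mul_le_mul_of_nonneg_left hr (norm_nonneg p))
  rw [inner_eq_inner_add_smul_sub p r b]
  nlinarith [sq_nonneg (‖q‖ - ‖p‖), sq_nonneg (‖p‖ - K * ‖q‖), mul_nonneg hb (sq_nonneg ‖p‖)]

lemma neg_le_two_inner_add_two_inner_of_norm_add_smul_le {q p r : V} {b K : ℝ}
    (hb : 0 ≤ b) (hr : ‖r + b • p‖ ≤ K * ‖q‖) :
    -((2 * b + (2 + K ^ 2)) * (‖q‖ ^ 2 + ‖p‖ ^ 2)) ≤ 2 * ⟪q, p⟫ + 2 * ⟪p, r⟫ := by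
  have hqp := neg_le_of_abs_le (abs_real_inner_le_norm q p)
  have hpr := neg_le_of_abs_le
    ((abs_real_inner_le_norm p _).trans (mul_le_mul_of_nonneg_left hr (norm_nonneg p)))
  rw [inner_eq_inner_add_smul_sub p r b]
  nlinarith [sq_nonneg (‖q‖ - ‖p‖), sq_nonneg (‖p‖ - K * ‖q‖), mul_nonneg hb (sq_nonneg ‖q‖),
    sq_nonneg (K * ‖p‖)]

variable {I : Set ℝ} {q : ℝ → V} {b w : ℝ → ℝ} {K : ℝ}

lemma hasDerivAt_norm_sq_add_norm_sq_deriv (hI : IsOpen I) (hq : ContDiffOn ℝ 2 q I) {t : ℝ}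
    (ht : t ∈ I) :
    HasDerivAt (fun t => ‖q t‖ ^ 2 + ‖deriv q t‖ ^ 2)
      (2 * ⟪q t, deriv q t⟫ + 2 * ⟪deriv q t, deriv (deriv q) t⟫) t := by
  have hq' : HasDerivAt q (deriv q t) t :=
    ((hq.differentiableOn (by norm_num)).differentiableAt (hI.mem_nhds ht)).hasDerivAt
  have hq₁ : ContDiffOn ℝ 1 (deriv q) I := hq.deriv_of_isOpen hI (by norm_num)
  have hq'' : HasDerivAt (deriv q) (deriv (deriv q) t) t :=
    ((hq₁.differentiableOn one_ne_zero).differentiableAt (hI.mem_nhds ht)).hasDerivAt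
  exact hq'.norm_sq.add hq''.norm_sq

lemma antitoneOn_exp_mul_energy (hI : IsOpen I) (hIc : Convex ℝ I) (hq : ContDiffOn ℝ 2 q I)
    (hb : ∀ t ∈ I, 0 ≤ b t)
    (hK : ∀ t ∈ I, ‖deriv (deriv q) t + b t • deriv q t‖ ≤ K * ‖q t‖) :
    AntitoneOn (fun t => Real.exp (-(2 + K ^ 2) * t) * (‖q t‖ ^ 2 + ‖deriv q t‖ ^ 2)) I := by
  refine antitoneOn_mul_of_hasDerivAt hI hIc (a := fun _ => -(2 + K ^ 2))
    (fun t ht => hasDerivAt_norm_sq_add_norm_sq_deriv hI hq ht) (fun t _ => ?_)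
    (fun t _ => (Real.exp_pos _).le) (fun t ht => ?_)
  · exact hasDerivAt_exp_const_mul _ t
  · simpa only [neg_mul, neg_neg] using
      two_inner_add_two_inner_le_of_norm_add_smul_le (hb t ht) (hK t ht)

lemma monotoneOn_sq_mul_exp_mul_energy (hI : IsOpen I) (hIc : Convex ℝ I)
    (hq : ContDiffOn ℝ 2 q I) (hb : ∀ t ∈ I, 0 ≤ b t)
    (hK : ∀ t ∈ I, ‖deriv (deriv q) t + b t • deriv q t‖ ≤ K * ‖q t‖)
    (hw : ∀ t ∈ I, HasDerivAt w (b t * w t) t) :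
    MonotoneOn
      (fun t => w t ^ 2 * Real.exp ((2 + K ^ 2) * t) * (‖q t‖ ^ 2 + ‖deriv q t‖ ^ 2)) I := by
  refine monotoneOn_mul_of_hasDerivAt hI hIc (a := fun t => 2 * b t + (2 + K ^ 2))
    (fun t ht => hasDerivAt_norm_sq_add_norm_sq_deriv hI hq ht) (fun t ht => ?_)
    (fun t _ => by positivity) (fun t ht => ?_)
  · refine (((hw t ht).pow 2).mul (hasDerivAt_exp_const_mul _ t)).congr_deriv ?_
    simp only [Pi.pow_apply]
    ring
  · exact neg_le_two_inner_add_two_inner_of_norm_add_smul_le (hb t ht) (hK t ht)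

end Energy

section Radial

variable {m₁ m₂ : ℕ} {lam : ℂ} {q : ℝ → ℂ}

lemma RadialODEt.norm_deriv_deriv_add_radialDrift_smul {t : ℝ} (h : RadialODEt m₁ m₂ lam q t) :
    ‖deriv (deriv q) t + radialDrift m₁ m₂ t • deriv q t‖
      = ‖(rho m₁ m₂ : ℂ) ^ 2 - lam ^ 2‖ * ‖q t‖ := by
  have hsolved : deriv (deriv q) t + radialDrift m₁ m₂ t • deriv q t
      = -(((rho m₁ m₂ : ℂ) ^ 2 - lam ^ 2) * q t) := by
    rw [Complex.real_smul]
    unfold RadialODEt at h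
    unfold radialDrift
    linear_combination h
  rw [hsolved, norm_neg, norm_mul]

lemma exists_radialWeight_sq_mul_energy_le {T : ℝ} (hq : ContDiffOn ℝ 2 q (Ioo 0 T))
    (hODE : ∀ t ∈ Ioo 0 T, RadialODEt m₁ m₂ lam q t) :
    ∃ M, ∀ t ∈ Ioo 0 T, radialWeight m₁ m₂ t ^ 2 * (‖q t‖ ^ 2 + ‖deriv q t‖ ^ 2) ≤ M := by
  obtain hempty | ⟨s, hs⟩ := (Ioo (0 : ℝ) T).eq_empty_or_nonempty
  · exact ⟨0, by simp [hempty]⟩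
  set w := radialWeight m₁ m₂
  set E := fun t => ‖q t‖ ^ 2 + ‖deriv q t‖ ^ 2
  set κ := 2 + ‖(rho m₁ m₂ : ℂ) ^ 2 - lam ^ 2‖ ^ 2
  have hκ : 0 ≤ κ := by positivity
  have hb : ∀ t ∈ Ioo 0 T, 0 ≤ radialDrift m₁ m₂ t := fun t ht => radialDrift_nonneg _ _ ht.1.le
  have hK : ∀ t ∈ Ioo 0 T, ‖deriv (deriv q) t + radialDrift m₁ m₂ t • deriv q t‖
      ≤ ‖(rho m₁ m₂ : ℂ) ^ 2 - lam ^ 2‖ * ‖q t‖ := fun t ht =>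
    (hODE t ht).norm_deriv_deriv_add_radialDrift_smul.le
  have hG := monotoneOn_sq_mul_exp_mul_energy isOpen_Ioo (convex_Ioo 0 T) hq hb hK
    (fun t ht => hasDerivAt_radialWeight m₁ m₂ ht.1.ne')
  have hH := antitoneOn_exp_mul_energy isOpen_Ioo (convex_Ioo 0 T) hq hb hK
  refine ⟨max (w s ^ 2 * Real.exp (κ * s) * E s)
    (w T ^ 2 * (Real.exp (-κ * s) * E s * Real.exp (κ * T))), fun t ht => ?_⟩
  have hE : 0 ≤ E t := by positivity
  rcases le_total t s with hts | hst
  · refine le_max_of_le_left ?_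
    calc w t ^ 2 * E t ≤ w t ^ 2 * Real.exp (κ * t) * E t := by
          gcongr
          exact le_mul_of_one_le_right (by positivity) (Real.one_le_exp (mul_nonneg hκ ht.1.le))
      _ ≤ w s ^ 2 * Real.exp (κ * s) * E s := hG ht hs hts
  · refine le_max_of_le_right ?_
    have hwt : w t ≤ w T :=
      monotoneOn_radialWeight m₁ m₂ ht.1.le (ht.1.trans ht.2).le ht.2.le
    calc w t ^ 2 * E t = w t ^ 2 * (Real.exp (-κ * t) * E t * Real.exp (κ * t)) := by
          rw [mul_right_comm, ← Real.exp_add, neg_mul, neg_add_cancel, Real.exp_zero, one_mul]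
      _ ≤ w T ^ 2 * (Real.exp (-κ * s) * E s * Real.exp (κ * T)) := by
          have hw := radialWeight_nonneg m₁ m₂ ht.1.le
          gcongr ?_ ^ 2 * (?_ * Real.exp (κ * ?_))
          · exact hH hs ht hst
          · exact ht.2.le

end Radial

theorem radial_solutions_locally_integrable_general (m₁ m₂ : ℕ) (lam : ℂ)
    (T : ℝ) (q : ℝ → ℂ)
    (hq : ContDiffOn ℝ 2 q (Set.Ioo 0 T))
    (hODE : ∀ t ∈ Set.Ioo (0 : ℝ) T, RadialODEt m₁ m₂ lam q t) :
    MeasureTheory.IntegrableOn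
      (fun t : ℝ => q t * (((2 * Real.sinh t) ^ m₁ * (2 * Real.sinh (2 * t)) ^ m₂ : ℝ) : ℂ))
      (Set.Ioo 0 T) := by
  change IntegrableOn (fun t => q t * (radialWeight m₁ m₂ t : ℂ)) (Ioo 0 T)
  obtain ⟨M, hM⟩ := exists_radialWeight_sq_mul_energy_le hq hODE
  have hcont : ContinuousOn (fun t => q t * (radialWeight m₁ m₂ t : ℂ)) (Ioo 0 T) :=
    hq.continuousOn.mul (Complex.continuous_ofReal.comp (continuous_radialWeight m₁ m₂)).continuousOn
  refine IntegrableOn.of_bound measure_Ioo_lt_top (hcont.aestronglyMeasurable measurableSet_Ioo)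
    (√M) ((ae_restrict_iff' measurableSet_Ioo).2 (.of_forall fun t ht => ?_))
  have hw := radialWeight_nonneg m₁ m₂ ht.1.le
  calc ‖q t * (radialWeight m₁ m₂ t : ℂ)‖ = √(radialWeight m₁ m₂ t ^ 2 * ‖q t‖ ^ 2) := by
        rw [norm_mul, Complex.norm_real, Real.norm_of_nonneg hw, Real.sqrt_mul (by positivity),
          Real.sqrt_sq hw, Real.sqrt_sq (norm_nonneg _), mul_comm]
    _ ≤ √M := Real.sqrt_le_sqrt <|
      (mul_le_mul_of_nonneg_left (le_add_of_nonneg_right (sq_nonneg _)) (sq_nonneg _)).trans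
        (hM t ht)

theorem radial_solutions_locally_integrable (m₁ m₂ : ℕ) (hm₁ : 1 ≤ m₁) (lam : ℂ)
    (T : ℝ) (hT : 0 < T) (q : ℝ → ℂ)
    (hq : ContDiffOn ℝ 2 q (Set.Ioo 0 T))
    (hODE : ∀ t ∈ Set.Ioo (0 : ℝ) T, RadialODEt m₁ m₂ lam q t) :
    MeasureTheory.IntegrableOn
      (fun t : ℝ => q t * (((2 * Real.sinh t) ^ m₁ * (2 * Real.sinh (2 * t)) ^ m₂ : ℝ) : ℂ))
      (Set.Ioo 0 T) :=
  radial_solutions_locally_integrable_general m₁ m₂ lam T q hq hODE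

end
end

section
/- Let m₁ ≥ 2 be an even integer and m₂ = 0, and set ρ = m₁/2. Then the meromorphic function ζ ↦ c(iζ)·c(−iζ) has no zeros: for every ζ₀ ∈ ℂ it is NOT the case that c(iζ)·c(−iζ) → 0 as ζ → ζ₀ along the punctured neighbourhood filter 𝓝[≠] ζ₀. -/
open Set Filter Topology

noncomputable section

/-- `g(μ) = Γ(μ)2^{−μ}/(Γ((m₁/2+1+μ)/2)Γ((m₁/2+m₂+μ)/2))`. -/
def gfun (m₁ m₂ : ℕ) (μ : ℂ) : ℂ :=
  Complex.Gamma μ * (2 : ℂ) ^ (-μ) /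
    (Complex.Gamma (((m₁ : ℂ) / 2 + 1 + μ) / 2) *
      Complex.Gamma (((m₁ : ℂ) / 2 + (m₂ : ℂ) + μ) / 2))

/-- The Harish-Chandra c-function, normalized so that `c(ρ) = 1`. -/
def cfun (m₁ m₂ : ℕ) (μ : ℂ) : ℂ := gfun m₁ m₂ μ / gfun m₁ m₂ ((rho m₁ m₂ : ℂ))

lemma Gamma_add_nat : ∀ (n : ℕ) (μ : ℂ), (∀ j < n, μ + j ≠ 0) →
    Complex.Gamma (μ + n) = Complex.Gamma μ * ∏ j ∈ Finset.range n, (μ + j) := by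
  intro n
  induction n with
  | zero => simp
  | succ n ih =>
    intro μ h
    have h1 : μ + ((n + 1 : ℕ) : ℂ) = (μ + n) + 1 := by push_cast; ring
    rw [h1, Complex.Gamma_add_one _ (h n (Nat.lt_succ_self n)),
      ih μ (fun j hj => h j (Nat.lt_succ_of_lt hj)), Finset.prod_range_succ]
    ring

lemma aux_div (a b c y z : ℂ) (hy : y ≠ 0) :
    a * (z * y) / (b * (y * c)) = a * z / (b * c) := by
  rw [show a * (z * y) = a * z * y by ring, show b * (y * c) = b * c * y by ring,
    mul_div_mul_right _ _ hy]

lemma gfun_eq (k : ℕ) (μ : ℂ) :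
    gfun (2 * k) 0 μ = Complex.Gamma μ * (2 : ℂ) ^ ((k : ℂ) - 1) /
      (Complex.Gamma (μ + k) * (Real.sqrt Real.pi : ℂ)) := by
  have hA : (((2 * k : ℕ) : ℂ) / 2 + 1 + μ) / 2 = ((k : ℂ) + μ) / 2 + 1 / 2 := by
    push_cast; ring
  have hB : (((2 * k : ℕ) : ℂ) / 2 + ((0 : ℕ) : ℂ) + μ) / 2 = ((k : ℂ) + μ) / 2 := by
    push_cast; ring
  have hdup := Complex.Gamma_mul_Gamma_add_half (((k : ℂ) + μ) / 2)
  have h2s : 2 * (((k : ℂ) + μ) / 2) = (k : ℂ) + μ := by ring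
  rw [h2s] at hdup
  have hy : (2 : ℂ) ^ ((1 : ℂ) - ((k : ℂ) + μ)) ≠ 0 := by
    simp [Complex.cpow_eq_zero_iff]
  have hx : (2 : ℂ) ^ (-μ) = (2 : ℂ) ^ ((k : ℂ) - 1) * (2 : ℂ) ^ ((1 : ℂ) - ((k : ℂ) + μ)) := by
    rw [← Complex.cpow_add _ _ (by norm_num : (2 : ℂ) ≠ 0)]
    ring_nf
  rw [gfun, hA, hB, mul_comm (Complex.Gamma (((k : ℂ) + μ) / 2 + 1 / 2)), hdup, hx]
  rw [show Complex.Gamma ((k : ℂ) + μ) * (2 : ℂ) ^ (1 - ((k : ℂ) + μ)) * (Real.sqrt Real.pi : ℂ)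
      = Complex.Gamma ((k : ℂ) + μ) * ((2 : ℂ) ^ ((1 : ℂ) - ((k : ℂ) + μ)) *
        (Real.sqrt Real.pi : ℂ)) by ring,
    aux_div _ _ _ _ _ hy, add_comm (k : ℂ) μ]

lemma cfun_eq (k : ℕ) (hk : 1 ≤ k) (μ : ℂ) (hμ : μ.im ≠ 0) :
    cfun (2 * k) 0 μ = (∏ j ∈ Finset.range k, ((k : ℂ) + j)) /
      (∏ j ∈ Finset.range k, (μ + j)) := by
  have hrho : ((rho (2 * k) 0 : ℝ) : ℂ) = (k : ℂ) := by
    simp [rho]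
  have hμj : ∀ j : ℕ, μ + j ≠ 0 := by
    intro j h
    have : (μ + j).im = 0 := by rw [h]; simp
    simp at this; exact hμ this
  have hkj : ∀ j < k, (k : ℂ) + j ≠ 0 := by
    intro j _ h
    have : ((k + j : ℕ) : ℂ) = 0 := by push_cast; linear_combination h
    rw [Nat.cast_eq_zero] at this; omega
  have hΓμ : Complex.Gamma μ ≠ 0 := by
    apply Complex.Gamma_ne_zero
    intro m h
    have : μ.im = 0 := by rw [h]; simp
    exact hμ this
  have hΓk : Complex.Gamma (k : ℂ) ≠ 0 := by
    apply Complex.Gamma_ne_zero_of_re_pos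
    simp; omega
  have hP : (∏ j ∈ Finset.range k, (μ + j)) ≠ 0 :=
    Finset.prod_ne_zero_iff.mpr fun j _ => hμj j
  have hC : (∏ j ∈ Finset.range k, ((k : ℂ) + j)) ≠ 0 :=
    Finset.prod_ne_zero_iff.mpr fun j hj => hkj j (Finset.mem_range.mp hj)
  have hS : ((Real.sqrt Real.pi : ℝ) : ℂ) ≠ 0 := by
    simp [Real.sqrt_eq_zero', Real.pi_pos.le]
  have hT : (2 : ℂ) ^ ((k : ℂ) - 1) ≠ 0 := by
    simp [Complex.cpow_eq_zero_iff]
  rw [cfun, hrho, gfun_eq, gfun_eq,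
    Gamma_add_nat k μ (fun j _ => hμj j), Gamma_add_nat k (k : ℂ) hkj]
  field_simp

theorem cProduct_no_zeros_even (m₁ : ℕ) (hm₁ : 2 ≤ m₁) (heven : Even m₁) (ζ₀ : ℂ) :
    ¬ Filter.Tendsto
        (fun ζ : ℂ => cfun m₁ 0 (Complex.I * ζ) * cfun m₁ 0 (-(Complex.I * ζ)))
        (nhdsWithin ζ₀ {ζ₀}ᶜ) (nhds 0) := by
  obtain ⟨k, hk⟩ : ∃ k, m₁ = 2 * k := by
    obtain ⟨r, hr⟩ := heven; exact ⟨r, by omega⟩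
  have hk1 : 1 ≤ k := by omega
  subst hk
  set C : ℂ := ∏ j ∈ Finset.range k, ((k : ℂ) + j) with hCdef
  have hC : C ≠ 0 := by
    apply Finset.prod_ne_zero_iff.mpr
    intro j _ h
    have : ((k + j : ℕ) : ℂ) = 0 := by push_cast; linear_combination h
    rw [Nat.cast_eq_zero] at this; omega
  intro h
  set P : ℂ → ℂ := fun ζ => (∏ j ∈ Finset.range k, (Complex.I * ζ + j)) *
    (∏ j ∈ Finset.range k, (-(Complex.I * ζ) + j)) with hPdef
  have hPcont : Continuous P := by
    apply Continuous.mul <;> exact continuous_finset_prod _ (fun j _ => by continuity)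
  set g : ℝ → ℂ := fun t => ζ₀ + t with hgdef
  have hgc : Continuous g := by continuity
  have hg : Tendsto g (𝓝[≠] (0 : ℝ)) (𝓝[≠] ζ₀) := by
    rw [tendsto_nhdsWithin_iff]
    constructor
    · have := (hgc.tendsto 0).mono_left (nhdsWithin_le_nhds (s := {(0:ℝ)}ᶜ))
      simpa [hgdef] using this
    · filter_upwards [eventually_mem_nhdsWithin] with t ht
      simp only [mem_compl_iff, mem_singleton_iff] at ht ⊢
      intro hcon
      apply ht
      have : (t : ℂ) = 0 := by linear_combination hcon
      exact_mod_cast this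
  have h1 : Tendsto (fun t => (cfun (2 * k) 0 (Complex.I * g t) *
      cfun (2 * k) 0 (-(Complex.I * g t))) * P (g t)) (𝓝[≠] (0 : ℝ)) (𝓝 (0 * P ζ₀)) :=
    (h.comp hg).mul ((hPcont.tendsto ζ₀).comp (hg.mono_right nhdsWithin_le_nhds))
  rw [zero_mul] at h1
  have hre : ∀ᶠ t in 𝓝[≠] (0 : ℝ), (g t).re ≠ 0 := by
    have hre_eq : ∀ t : ℝ, (g t).re = ζ₀.re + t := by intro t; simp [hgdef]
    by_cases hz : ζ₀.re = 0
    · filter_upwards [eventually_mem_nhdsWithin] with t ht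
      simp only [mem_compl_iff, mem_singleton_iff] at ht
      rw [hre_eq, hz, zero_add]; exact ht
    · have hc : ContinuousAt (fun t : ℝ => ζ₀.re + t) 0 := by fun_prop
      have := hc.eventually_ne (by simpa using hz)
      filter_upwards [nhdsWithin_le_nhds this] with t ht
      rw [hre_eq]; exact ht
  have h2 : ∀ᶠ t in 𝓝[≠] (0 : ℝ),
      (cfun (2 * k) 0 (Complex.I * g t) * cfun (2 * k) 0 (-(Complex.I * g t))) * P (g t)
        = C * C := by
    filter_upwards [hre] with t ht
    have him1 : (Complex.I * g t).im ≠ 0 := by simpa using ht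
    have him2 : (-(Complex.I * g t)).im ≠ 0 := by simpa using ht
    rw [cfun_eq k hk1 _ him1, cfun_eq k hk1 _ him2]
    have hP1 : (∏ j ∈ Finset.range k, (Complex.I * g t + j)) ≠ 0 := by
      apply Finset.prod_ne_zero_iff.mpr
      intro j _ hcon
      have : (Complex.I * g t + j).im = 0 := by rw [hcon]; simp
      simp at this
      exact him1 (by simpa using this)
    have hP2 : (∏ j ∈ Finset.range k, (-(Complex.I * g t) + j)) ≠ 0 := by
      apply Finset.prod_ne_zero_iff.mpr
      intro j _ hcon
      have : (-(Complex.I * g t) + j).im = 0 := by rw [hcon]; simp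
      simp at this
      exact him2 (by simpa using this)
    rw [hPdef]
    first
    | (field_simp; ring)
    | field_simp
  have h3 : Tendsto (fun _ : ℝ => C * C) (𝓝[≠] (0 : ℝ)) (𝓝 0) :=
    h1.congr' h2
  have := tendsto_nhds_unique h3 tendsto_const_nhds
  exact hC (by simpa [mul_eq_zero] using this)

end
end

section
/- Let m₁ ≥ 1 and m₂ ≥ 0 be integers, ρ = m₁/2 + m₂, and assume either (m₂ = 0 and m₁ is odd), in which case set j = 1, or (m₁ is even and m₂ is odd), in which case set j = 2. Then for every ζ₀ ∈ ℂ, the function ζ ↦ c(iζ)·c(−iζ) tends to 0 as ζ → ζ₀ along the punctured neighbourhood filter 𝓝[≠] ζ₀ if and only if there exists k ∈ ℕ (k ≥ 0) with ζ₀ = i·(ρ + j·k) or ζ₀ = −i·(ρ + j·k). -/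
open Set Filter Topology

noncomputable section

/-!
A meromorphic function tends to `0` along `𝓝[≠] ζ₀` iff its order at `ζ₀` is positive, and
`ζ ↦ c(iζ)c(-iζ)` is meromorphic. Since `1/Γ` is entire with simple zeros exactly at
`0, -1, -2, …` (by `1/Γ(s) = s/Γ(s+1)`), the order of `g` at `μ` is the number of poles of
`Γ((m₁/2+1+μ)/2)` and `Γ((m₁/2+m₂+μ)/2)` minus that of `Γ(μ)`. All these poles lie at
half-integers, where the sign of the order of `g(μ)g(-μ)` is a question of integer arithmetic:
for `m₂ = 0` the zeros `±(ρ+k)` are half-integers, away from the poles of `Γ(μ)Γ(-μ)`; for `m₁`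
even and `m₂` odd every zero `±(m₁/2+1+2n)` is cancelled by a simple pole of `Γ(μ)Γ(-μ)`, unless
it is a double zero, which happens exactly at `±(ρ+2k)`.
-/

open Complex

lemma analyticAt_inv_Gamma (z : ℂ) : AnalyticAt ℂ (fun w => (Gamma w)⁻¹) z :=
  differentiable_one_div_Gamma.analyticAt z

@[fun_prop]
lemma AnalyticAt.meromorphicAt_Gamma {f : ℂ → ℂ} {z : ℂ} (hf : AnalyticAt ℂ f z) :
    MeromorphicAt (fun w => Gamma (f w)) z :=
  (Meromorphic.Gamma (f z)).comp_analyticAt hf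

open Classical in
def gammaPoleOrder (z : ℂ) : ℤ := if ∃ n : ℕ, z = -n then 1 else 0

lemma gammaPoleOrder_eq_zero {w : ℂ} (hw : ∀ n : ℕ, w ≠ -n) : gammaPoleOrder w = 0 := by
  simp [gammaPoleOrder, hw]

lemma gammaPoleOrder_intCast_div (z : ℤ) {d : ℕ} (hd : d ≠ 0) :
    gammaPoleOrder ((z : ℂ) / d) = if z ≤ 0 ∧ (d : ℤ) ∣ z then 1 else 0 := by
  unfold gammaPoleOrder
  congr 1
  apply propext
  have hd' : (d : ℂ) ≠ 0 := Nat.cast_ne_zero.mpr hd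
  constructor
  · rintro ⟨n, hn⟩
    rw [div_eq_iff hd'] at hn
    have hz : z = -n * d := by exact_mod_cast hn
    exact ⟨by rw [hz]; nlinarith [Int.natCast_nonneg n, Int.natCast_nonneg d],
      ⟨-n, by rw [hz]; ring⟩⟩
  · rintro ⟨hz, w, rfl⟩
    have hw : ((-w).toNat : ℤ) = -w :=
      Int.toNat_of_nonneg (by nlinarith [Int.natCast_pos.mpr (Nat.pos_of_ne_zero hd)])
    refine ⟨(-w).toNat, ?_⟩
    rw [div_eq_iff hd', show (((-w).toNat : ℕ) : ℂ) = (((-w).toNat : ℤ) : ℂ) by norm_cast, hw]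
    push_cast
    ring

lemma meromorphicOrderAt_inv_Gamma_eq_add (z : ℂ) :
    meromorphicOrderAt (fun w => (Gamma w)⁻¹) z =
      meromorphicOrderAt id z + meromorphicOrderAt (fun w => (Gamma w)⁻¹) (z + 1) := by
  have h : (fun w => (Gamma w)⁻¹) = id * fun w => (Gamma (w + 1))⁻¹ :=
    funext one_div_Gamma_eq_self_mul_one_div_Gamma_add_one
  conv_lhs => rw [h, meromorphicOrderAt_mul (by fun_prop) (by fun_prop),
    meromorphicOrderAt_fun_comp_add_const_eq_meromorphicOrderAt (f := fun w => (Gamma w)⁻¹)]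

lemma meromorphicOrderAt_inv_Gamma (z : ℂ) :
    meromorphicOrderAt (fun w => (Gamma w)⁻¹) z = gammaPoleOrder z := by
  unfold gammaPoleOrder
  split_ifs with hz
  · obtain ⟨n, rfl⟩ := hz
    induction n with
    | zero =>
      rw [meromorphicOrderAt_inv_Gamma_eq_add,
        (analyticAt_inv_Gamma _).meromorphicNFAt.meromorphicOrderAt_eq_zero_iff.mpr (by simp)]
      simp
    | succ n ih =>
      rw [meromorphicOrderAt_inv_Gamma_eq_add,
        analyticAt_id.meromorphicNFAt.meromorphicOrderAt_eq_zero_iff.mpr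
          (neg_ne_zero.mpr (Nat.cast_ne_zero.mpr n.succ_ne_zero))]
      simpa using ih
  · push Not at hz
    exact (analyticAt_inv_Gamma z).meromorphicNFAt.meromorphicOrderAt_eq_zero_iff.mpr
      (inv_ne_zero (Gamma_ne_zero hz))

lemma meromorphicOrderAt_Gamma (z : ℂ) : meromorphicOrderAt Gamma z = -gammaPoleOrder z := by
  rw [show Gamma = (fun w => (Gamma w)⁻¹)⁻¹ by ext; simp, meromorphicOrderAt_inv,
    meromorphicOrderAt_inv_Gamma]

lemma meromorphicOrderAt_Gamma_comp {g : ℂ → ℂ} {x : ℂ} (hg : AnalyticAt ℂ g x)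
    (hg' : deriv g x ≠ 0) :
    meromorphicOrderAt (fun z => Gamma (g z)) x = -gammaPoleOrder (g x) := by
  rw [← meromorphicOrderAt_Gamma]
  exact meromorphicOrderAt_comp_of_deriv_ne_zero hg hg'

def gfunOrder (m₁ m₂ : ℕ) (μ : ℂ) : ℤ :=
  gammaPoleOrder (((m₁ : ℂ) / 2 + 1 + μ) / 2) + gammaPoleOrder (((m₁ : ℂ) / 2 + m₂ + μ) / 2)
    - gammaPoleOrder μ

lemma analyticAt_two_cpow_neg (μ : ℂ) : AnalyticAt ℂ (fun w : ℂ => (2 : ℂ) ^ (-w)) μ :=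
  analyticAt_const.cpow (by fun_prop) (by norm_num)

lemma meromorphicAt_gfun (m₁ m₂ : ℕ) (μ : ℂ) : MeromorphicAt (gfun m₁ m₂) μ := by
  have := (analyticAt_two_cpow_neg μ).meromorphicAt
  unfold gfun
  fun_prop

lemma meromorphicOrderAt_gfun (m₁ m₂ : ℕ) (μ₀ : ℂ) :
    meromorphicOrderAt (gfun m₁ m₂) μ₀ = gfunOrder m₁ m₂ μ₀ := by
  have hpow := analyticAt_two_cpow_neg μ₀
  have hpow_order : meromorphicOrderAt (fun μ : ℂ => (2 : ℂ) ^ (-μ)) μ₀ = 0 :=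
    hpow.meromorphicNFAt.meromorphicOrderAt_eq_zero_iff.mpr (by simp)
  have hhalf : ∀ c : ℂ, meromorphicOrderAt (fun μ => Gamma ((c + μ) / 2)) μ₀ =
      -gammaPoleOrder ((c + μ₀) / 2) := fun c =>
    meromorphicOrderAt_Gamma_comp (by fun_prop) (by simp)
  have := hpow.meromorphicAt
  show meromorphicOrderAt ((Gamma * fun μ : ℂ => (2 : ℂ) ^ (-μ)) /
    ((fun μ => Gamma (((m₁ : ℂ) / 2 + 1 + μ) / 2)) *
      fun μ => Gamma (((m₁ : ℂ) / 2 + m₂ + μ) / 2))) μ₀ = _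
  rw [meromorphicOrderAt_div (by fun_prop) (by fun_prop),
    meromorphicOrderAt_mul (by fun_prop) (by fun_prop),
    meromorphicOrderAt_mul (by fun_prop) (by fun_prop), hpow_order, hhalf, hhalf,
    meromorphicOrderAt_Gamma, gfunOrder]
  norm_cast
  ring

lemma gfun_ne_zero_of_re_pos (m₁ m₂ : ℕ) {μ : ℂ} (hμ : 0 < μ.re) : gfun m₁ m₂ μ ≠ 0 := by
  refine div_ne_zero (mul_ne_zero (Gamma_ne_zero_of_re_pos hμ) (by simp))
    (mul_ne_zero (Gamma_ne_zero_of_re_pos ?_) (Gamma_ne_zero_of_re_pos ?_)) <;>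
    simp only [div_ofNat_re, add_re, natCast_re, one_re] <;> positivity

@[fun_prop]
lemma meromorphicAt_cfun (m₁ m₂ : ℕ) (μ : ℂ) : MeromorphicAt (cfun m₁ m₂) μ :=
  (meromorphicAt_gfun m₁ m₂ μ).div (MeromorphicAt.const _ μ)

lemma meromorphicOrderAt_cfun {m₁ m₂ : ℕ} (hρ : gfun m₁ m₂ (rho m₁ m₂ : ℂ) ≠ 0) (μ₀ : ℂ) :
    meromorphicOrderAt (cfun m₁ m₂) μ₀ = gfunOrder m₁ m₂ μ₀ := by
  show meromorphicOrderAt (gfun m₁ m₂ / fun _ => gfun m₁ m₂ (rho m₁ m₂ : ℂ)) μ₀ = _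
  rw [meromorphicOrderAt_div (meromorphicAt_gfun m₁ m₂ μ₀) (MeromorphicAt.const _ μ₀),
    meromorphicOrderAt_gfun,
    analyticAt_const.meromorphicNFAt.meromorphicOrderAt_eq_zero_iff.mpr hρ, sub_zero]

lemma meromorphicOrderAt_cProduct {m₁ m₂ : ℕ} (hρ : gfun m₁ m₂ (rho m₁ m₂ : ℂ) ≠ 0) (ζ₀ : ℂ) :
    meromorphicOrderAt (fun ζ => cfun m₁ m₂ (I * ζ) * cfun m₁ m₂ (-(I * ζ))) ζ₀ =
      ((gfunOrder m₁ m₂ (I * ζ₀) + gfunOrder m₁ m₂ (-(I * ζ₀)) : ℤ) : WithTop ℤ) := by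
  have hcomp : ∀ s : ℂ, s ≠ 0 → meromorphicOrderAt (fun ζ => cfun m₁ m₂ (s * ζ)) ζ₀ =
      gfunOrder m₁ m₂ (s * ζ₀) := fun s hs => by
    rw [← meromorphicOrderAt_cfun hρ]
    exact meromorphicOrderAt_comp_of_deriv_ne_zero (f := cfun m₁ m₂) (by fun_prop) (by simpa)
  rw [show (fun ζ => cfun m₁ m₂ (I * ζ) * cfun m₁ m₂ (-(I * ζ))) =
      (fun ζ => cfun m₁ m₂ (I * ζ)) * fun ζ => cfun m₁ m₂ (-I * ζ) by simp only [neg_mul]; rfl,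
    meromorphicOrderAt_mul (by fun_prop) (by fun_prop), hcomp I I_ne_zero,
    hcomp (-I) (neg_ne_zero.mpr I_ne_zero), neg_mul]
  norm_cast

lemma gfunOrder_eq_zero (m₁ m₂ : ℕ) {μ : ℂ} (hμ : ∀ z : ℤ, μ ≠ z / 2) :
    gfunOrder m₁ m₂ μ = 0 := by
  rw [gfunOrder, gammaPoleOrder_eq_zero, gammaPoleOrder_eq_zero, gammaPoleOrder_eq_zero,
    sub_zero, add_zero]
  · exact fun n hn => hμ (-(2 * n)) (by push_cast; linear_combination hn)
  · exact fun n hn => hμ (-(m₁ + 2 * m₂ + 4 * n)) (by push_cast; linear_combination 2 * hn)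
  · exact fun n hn => hμ (-(m₁ + 2 + 4 * n)) (by push_cast; linear_combination 2 * hn)

lemma gfunOrder_half_intCast (m₁ m₂ : ℕ) (z : ℤ) :
    gfunOrder m₁ m₂ ((z : ℂ) / 2) =
      (if m₁ + 2 + z ≤ 0 ∧ 4 ∣ m₁ + 2 + z then 1 else 0) +
      (if m₁ + 2 * m₂ + z ≤ 0 ∧ 4 ∣ m₁ + 2 * m₂ + z then 1 else 0) -
      (if z ≤ 0 ∧ 2 ∣ z then 1 else 0) := by
  have h₁ : ((m₁ : ℂ) / 2 + 1 + z / 2) / 2 = ((m₁ + 2 + z : ℤ) : ℂ) / (4 : ℕ) := by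
    push_cast; ring
  have h₂ : ((m₁ : ℂ) / 2 + m₂ + z / 2) / 2 = ((m₁ + 2 * m₂ + z : ℤ) : ℂ) / (4 : ℕ) := by
    push_cast; ring
  rw [gfunOrder, h₁, h₂, gammaPoleOrder_intCast_div _ (by norm_num),
    gammaPoleOrder_intCast_div _ (by norm_num),
    show (z : ℂ) / 2 = (z : ℂ) / (2 : ℕ) by norm_num, gammaPoleOrder_intCast_div _ (by norm_num)]
  norm_num

lemma exists_nat_eq_add_mul_iff (z c : ℤ) {d : ℕ} (hd : d ≠ 0) :
    (∃ k : ℕ, z = c + d * k) ↔ c ≤ z ∧ (d : ℤ) ∣ z - c := by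
  constructor
  · rintro ⟨k, rfl⟩
    exact ⟨le_add_of_nonneg_right (by positivity), ⟨k, by ring⟩⟩
  · rintro ⟨hz, w, hw⟩
    have : 0 ≤ w := by nlinarith [Int.natCast_pos.mpr (Nat.pos_of_ne_zero hd)]
    exact ⟨w.toNat, by rw [Int.toNat_of_nonneg this]; linarith⟩

lemma rho_add_eq_half_intCast (m₁ m₂ j k : ℕ) :
    (rho m₁ m₂ : ℂ) + j * k = ((m₁ + 2 * m₂ + 2 * j * k : ℤ) : ℂ) / 2 := by
  rw [rho]
  push_cast
  ring

lemma half_intCast_eq_rho_add_iff (m₁ m₂ j k : ℕ) (z : ℤ) :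
    (z : ℂ) / 2 = (rho m₁ m₂ : ℂ) + j * k ↔ z = (m₁ + 2 * m₂ : ℤ) + (2 * j : ℕ) * k := by
  rw [rho_add_eq_half_intCast, div_left_inj' two_ne_zero, Int.cast_inj]
  push_cast
  ring_nf

lemma gfunOrder_add_gfunOrder_neg_pos_iff {m₁ m₂ j : ℕ}
    (hcase : (m₂ = 0 ∧ Odd m₁ ∧ j = 1) ∨ (Even m₁ ∧ Odd m₂ ∧ j = 2)) (μ : ℂ) :
    0 < gfunOrder m₁ m₂ μ + gfunOrder m₁ m₂ (-μ) ↔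
      ∃ k : ℕ, μ = (rho m₁ m₂ : ℂ) + j * k ∨ μ = -((rho m₁ m₂ : ℂ) + j * k) := by
  have hj : 2 * j ≠ 0 := by rcases hcase with ⟨-, -, rfl⟩ | ⟨-, -, rfl⟩ <;> norm_num
  by_cases hμ : ∃ z : ℤ, μ = z / 2
  · obtain ⟨z, rfl⟩ := hμ
    have hneg : -((z : ℂ) / 2) = ((-z : ℤ) : ℂ) / 2 := by push_cast; ring
    simp only [exists_or, neg_eq_iff_eq_neg.symm, hneg, half_intCast_eq_rho_add_iff,
      exists_nat_eq_add_mul_iff _ _ hj, gfunOrder_half_intCast]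
    rcases hcase with ⟨rfl, ⟨p, rfl⟩, rfl⟩ | ⟨⟨a, rfl⟩, ⟨b, rfl⟩, rfl⟩ <;> push_cast <;>
      split_ifs <;> omega
  · have hμ' : ∀ z : ℤ, -μ ≠ z / 2 := fun z hz =>
      hμ ⟨-z, by push_cast; linear_combination -hz⟩
    rw [gfunOrder_eq_zero m₁ m₂ (not_exists.mp hμ), gfunOrder_eq_zero m₁ m₂ hμ']
    simp only [add_zero, lt_irrefl, false_iff, not_exists, rho_add_eq_half_intCast]
    rintro k (hk | hk)
    · exact hμ ⟨_, hk⟩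
    · exact hμ ⟨-(m₁ + 2 * m₂ + 2 * j * k), by rw [hk]; push_cast; ring⟩

lemma I_mul_eq_iff (ζ w : ℂ) : I * ζ = w ↔ ζ = -(I * w) := by
  constructor <;> rintro rfl <;> ring_nf <;> rw [I_sq] <;> ring

theorem cProduct_zero_location_general (m₁ m₂ : ℕ) (j : ℕ)
    (hcase : (m₂ = 0 ∧ Odd m₁ ∧ j = 1) ∨ (Even m₁ ∧ Odd m₂ ∧ j = 2)) (ζ₀ : ℂ) :
    Filter.Tendsto
        (fun ζ : ℂ => cfun m₁ m₂ (Complex.I * ζ) * cfun m₁ m₂ (-(Complex.I * ζ)))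
        (nhdsWithin ζ₀ {ζ₀}ᶜ) (nhds 0)
      ↔ ∃ k : ℕ, ζ₀ = Complex.I * ((rho m₁ m₂ : ℂ) + (j : ℂ) * (k : ℂ))
          ∨ ζ₀ = -(Complex.I * ((rho m₁ m₂ : ℂ) + (j : ℂ) * (k : ℂ))) := by
  have hρ : 0 < rho m₁ m₂ := by
    rcases hcase with ⟨-, hm₁, -⟩ | ⟨-, hm₂, -⟩
    · have := hm₁.pos
      unfold rho; positivity
    · have := hm₂.pos
      unfold rho; positivity
  have hgρ := gfun_ne_zero_of_re_pos m₁ m₂ (μ := (rho m₁ m₂ : ℂ)) (by simpa using hρ)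
  rw [tendsto_zero_iff_meromorphicOrderAt_pos (by fun_prop), meromorphicOrderAt_cProduct hgρ,
    WithTop.coe_pos, gfunOrder_add_gfunOrder_neg_pos_iff hcase]
  simp only [I_mul_eq_iff, mul_neg, neg_neg]
  exact exists_congr fun k => or_comm

theorem cProduct_zero_location (m₁ m₂ : ℕ) (hm₁ : 1 ≤ m₁) (j : ℕ)
    (hcase : (m₂ = 0 ∧ Odd m₁ ∧ j = 1) ∨ (Even m₁ ∧ Odd m₂ ∧ j = 2)) (ζ₀ : ℂ) :
    Filter.Tendsto
        (fun ζ : ℂ => cfun m₁ m₂ (Complex.I * ζ) * cfun m₁ m₂ (-(Complex.I * ζ)))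
        (nhdsWithin ζ₀ {ζ₀}ᶜ) (nhds 0)
      ↔ ∃ k : ℕ, ζ₀ = Complex.I * ((rho m₁ m₂ : ℂ) + (j : ℂ) * (k : ℂ))
          ∨ ζ₀ = -(Complex.I * ((rho m₁ m₂ : ℂ) + (j : ℂ) * (k : ℂ))) :=
  cProduct_zero_location_general m₁ m₂ j hcase ζ₀

end
end

section
/- Let m₁ ≥ 1 and m₂ ≥ 0 be integers, ρ = m₁/2 + m₂, and assume either (m₂ = 0 and m₁ is odd), in which case set j = 1, or (m₁ is even and m₂ is odd), in which case set j = 2. Then for every k ∈ ℕ (k ≥ 0) and for ζ₀ = i·(ρ + j·k) or ζ₀ = −i·(ρ + j·k), there exists a nonzero L ∈ ℂ such that c(iζ)·c(−iζ)/(ζ − ζ₀) tends to L as ζ → ζ₀ along the punctured neighbourhood filter 𝓝[≠] ζ₀; that is, each zero of the meromorphic function ζ ↦ c(iζ)·c(−iζ) is simple. -/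
open Set Filter Topology

noncomputable section

section Helpers
open Complex


lemma prod_shift (n : ℕ) : (∏ i ∈ Finset.range n, ((i:ℂ) - n)) = (-1)^n * (Nat.factorial n : ℂ) := by
  induction n with
  | zero => simp
  | succ n ih =>
    rw [Finset.prod_range_succ']
    have : (∏ i ∈ Finset.range n, ((↑(i+1):ℂ) - ↑(n+1))) = ∏ i ∈ Finset.range n, ((i:ℂ) - n) := by
      apply Finset.prod_congr rfl; intro i _; push_cast; ring
    rw [this, ih, Nat.factorial_succ]
    push_cast
    ring

lemma gammaInv_step {z : ℂ} (h : z ≠ 0) : (Gamma z)⁻¹ = z * (Gamma (z+1))⁻¹ := by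
  rw [Complex.Gamma_add_one z h, mul_inv, ← mul_assoc, mul_inv_cancel₀ h, one_mul]

lemma gammaInv_factor (n : ℕ) : ∀ z : ℂ, (∀ i : ℕ, i ≤ n → z + i ≠ 0) →
    (Gamma z)⁻¹ = (∏ i ∈ Finset.range (n+1), (z + i)) * (Gamma (z + ((n:ℂ)+1)))⁻¹ := by
  induction n with
  | zero =>
    intro z hz
    have h0 : z ≠ 0 := by simpa using hz 0 le_rfl
    rw [Finset.prod_range_one, gammaInv_step h0]
    norm_num
  | succ n ih =>
    intro z hz
    rw [Finset.prod_range_succ, ih z (fun i hi => hz i (hi.trans (Nat.le_succ n)))]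
    have h0 : z + ((n:ℂ)+1) ≠ 0 := by
      have := hz (n+1) le_rfl; push_cast at this; convert this using 2
    rw [gammaInv_step h0]
    have : z + ((n:ℂ)+1) + 1 = z + ((↑(n+1):ℂ)+1) := by push_cast; ring
    rw [this]
    push_cast
    ring

lemma tendsto_gammaInv_div (n : ℕ) :
    Tendsto (fun z : ℂ => (Gamma z)⁻¹ / (z + n)) (𝓝[≠] (-(n:ℂ)))
      (𝓝 ((-1)^n * (Nat.factorial n : ℂ))) := by
  set G : ℂ → ℂ := fun z => (∏ i ∈ Finset.range n, (z + i)) * (Gamma (z + ((n:ℂ)+1)))⁻¹ with hG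
  have hGc : Continuous G := by
    apply Continuous.mul
    · exact continuous_finset_prod _ (fun i _ => continuous_id.add continuous_const)
    · exact Complex.differentiable_one_div_Gamma.continuous.comp (continuous_id.add continuous_const)
  have hGval : G (-(n:ℂ)) = (-1)^n * (Nat.factorial n : ℂ) := by
    have h1 : (-(n:ℂ)) + ((n:ℂ)+1) = 1 := by ring
    have h2 : (∏ i ∈ Finset.range n, ((-(n:ℂ)) + i)) = ∏ i ∈ Finset.range n, ((i:ℂ) - n) :=
      Finset.prod_congr rfl (fun i _ => by ring)
    simp only [hG, h1, h2, Complex.Gamma_one, inv_one, mul_one, prod_shift]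
  have h1 : ∀ᶠ z : ℂ in 𝓝 (-(n:ℂ)), ∀ i ∈ Finset.range n, z + (i:ℂ) ≠ 0 := by
    rw [eventually_all_finset]
    intro i hi
    have hne : (-(n:ℂ)) ≠ -(i:ℂ) := by
      simp only [ne_eq, neg_inj, Nat.cast_inj]
      exact fun h => absurd (h ▸ hi) (by simp)
    exact (eventually_ne_nhds hne).mono (fun z hz h => hz (eq_neg_of_add_eq_zero_left h))
  have h2 : ∀ᶠ z in 𝓝[≠] (-(n:ℂ)), z ≠ -(n:ℂ) := by
    filter_upwards [self_mem_nhdsWithin] with z hz using hz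
  have hev : ∀ᶠ z in 𝓝[≠] (-(n:ℂ)), (Gamma z)⁻¹ / (z + n) = G z := by
    filter_upwards [h1.filter_mono nhdsWithin_le_nhds, h2] with z hz1 hz2
    have hzn : z + (n:ℂ) ≠ 0 := fun h => hz2 (eq_neg_of_add_eq_zero_left h)
    have hz : ∀ i : ℕ, i ≤ n → z + i ≠ 0 := by
      intro i hi
      rcases lt_or_eq_of_le hi with h | h
      · exact hz1 i (Finset.mem_range.2 h)
      · subst h; exact hzn
    rw [gammaInv_factor n z hz, Finset.prod_range_succ, div_eq_iff hzn, hG]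
    ring

  have := (hGc.continuousAt (x := -(n:ℂ))).tendsto.mono_left (nhdsWithin_le_nhds (s := {(-(n:ℂ))}ᶜ))
  rw [hGval] at this
  exact this.congr' (hev.mono fun z h => h.symm)



lemma tendsto_gammaInv_affine {w : ℂ → ℂ} {β ζ₀ : ℂ} (hβ : β ≠ 0) (n : ℕ)
    (hw : ∀ ζ, w ζ = -(n:ℂ) + β * (ζ - ζ₀)) :
    Tendsto (fun ζ => (Gamma (w ζ))⁻¹ / (ζ - ζ₀)) (𝓝[≠] ζ₀)
      (𝓝 (β * ((-1)^n * (Nat.factorial n : ℂ)))) := by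
  have hwt : Tendsto w (𝓝[≠] ζ₀) (𝓝[≠] (-(n:ℂ))) := by
    rw [tendsto_nhdsWithin_iff]
    refine ⟨?_, ?_⟩
    · have hc : Continuous w := by
        have hfe : w = fun ζ => -(n:ℂ) + β * (ζ - ζ₀) := funext hw
        rw [hfe]; continuity
      have := hc.continuousAt (x := ζ₀)
      have hv : w ζ₀ = -(n:ℂ) := by rw [hw ζ₀]; ring
      have ht := this.tendsto
      rw [hv] at ht
      exact ht.mono_left nhdsWithin_le_nhds
    · filter_upwards [self_mem_nhdsWithin] with ζ (hζ : ζ ≠ ζ₀)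
      simp only [Set.mem_compl_iff, Set.mem_singleton_iff, hw ζ]
      intro h
      have h2 : β * (ζ - ζ₀) = 0 := by linear_combination h
      rcases mul_eq_zero.1 h2 with h3 | h3
      · exact hβ h3
      · exact hζ (sub_eq_zero.1 h3)
  have hmain := (tendsto_gammaInv_div n).comp hwt
  have hev : ∀ᶠ ζ in 𝓝[≠] ζ₀,
      β * ((fun z : ℂ => (Gamma z)⁻¹ / (z + n)) ∘ w) ζ = (Gamma (w ζ))⁻¹ / (ζ - ζ₀) := by
    filter_upwards [self_mem_nhdsWithin] with ζ (hζ : ζ ≠ ζ₀)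
    have hd : ζ - ζ₀ ≠ 0 := sub_ne_zero.2 hζ
    have hwn : w ζ + (n:ℂ) = β * (ζ - ζ₀) := by rw [hw]; ring
    simp only [Function.comp_apply, hwn]
    rw [mul_div_assoc', mul_div_mul_left _ _ hβ]
  exact (hmain.const_mul β).congr' hev

lemma tendsto_sub_mul_inv {f : ℂ → ℂ} {ζ₀ d : ℂ} (hf : HasDerivAt f d ζ₀) (h0 : f ζ₀ = 0)
    (hd : d ≠ 0) :
    Tendsto (fun ζ => (ζ - ζ₀) * (f ζ)⁻¹) (𝓝[≠] ζ₀) (𝓝 d⁻¹) := by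
  have hs := hasDerivAt_iff_tendsto_slope.1 hf
  have := hs.inv₀ hd
  refine this.congr (fun ζ => ?_)
  rw [slope_def_field, h0, sub_zero, div_eq_mul_inv, mul_inv, inv_inv, mul_comm]


lemma tendsto_neg_reduce {Φ : ℂ → ℂ} (heven : ∀ ζ, Φ (-ζ) = Φ ζ) {ζ₀ L : ℂ}
    (h : Tendsto (fun ζ => Φ ζ / (ζ - ζ₀)) (𝓝[≠] ζ₀) (𝓝 L)) :
    Tendsto (fun ζ => Φ ζ / (ζ - (-ζ₀))) (𝓝[≠] (-ζ₀)) (𝓝 (-L)) := by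
  have hneg : Tendsto (fun ζ : ℂ => -ζ) (𝓝[≠] (-ζ₀)) (𝓝[≠] ζ₀) := by
    rw [tendsto_nhdsWithin_iff]
    refine ⟨?_, ?_⟩
    · have := (continuous_neg (G := ℂ)).continuousAt (x := -ζ₀) |>.tendsto
      rw [neg_neg] at this
      exact this.mono_left nhdsWithin_le_nhds
    · filter_upwards [self_mem_nhdsWithin] with ζ (hζ : ζ ≠ -ζ₀)
      simp only [Set.mem_compl_iff, Set.mem_singleton_iff]
      intro hc
      exact hζ (by rw [← hc, neg_neg])
  have h2 := (h.comp hneg).neg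
  refine h2.congr (fun ζ => ?_)
  simp only [Function.comp_apply, heven]
  rw [show -ζ - ζ₀ = -(ζ - -ζ₀) by ring, div_neg, neg_neg]

lemma cfun_prod_eq (m₁ m₂ : ℕ) (ζ : ℂ) (hζ : ζ ≠ 0) :
    cfun m₁ m₂ (I*ζ) * cfun m₁ m₂ (-(I*ζ)) =
      (Real.pi:ℂ) * (Complex.sin ((Real.pi:ℂ) * (I*ζ)))⁻¹ * (-(I*ζ))⁻¹ *
        (Gamma (((m₁:ℂ)/2 + 1 + I*ζ)/2))⁻¹ * (Gamma (((m₁:ℂ)/2 + (m₂:ℂ) + I*ζ)/2))⁻¹ *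
        (Gamma (((m₁:ℂ)/2 + 1 + -(I*ζ))/2))⁻¹ * (Gamma (((m₁:ℂ)/2 + (m₂:ℂ) + -(I*ζ))/2))⁻¹ *
        ((gfun m₁ m₂ ((rho m₁ m₂ : ℂ)))⁻¹)^2 := by
  have hIζ : -(I*ζ) ≠ 0 := neg_ne_zero.2 (mul_ne_zero I_ne_zero hζ)
  have key1 : Gamma (I*ζ) * Gamma (-(I*ζ)) = (Real.pi:ℂ) * (Complex.sin ((Real.pi:ℂ) * (I*ζ)))⁻¹ * (-(I*ζ))⁻¹ := by
    have h1 := Complex.Gamma_add_one (-(I*ζ)) hIζ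
    have h2 := Complex.Gamma_mul_Gamma_one_sub (I*ζ)
    have h3 : (1 : ℂ) - I*ζ = -(I*ζ) + 1 := by ring
    rw [h3, h1] at h2
    have h4 : Gamma (I*ζ) * Gamma (-(I*ζ)) =
        (Gamma (I*ζ) * (-(I*ζ) * Gamma (-(I*ζ)))) * (-(I*ζ))⁻¹ := by
      field_simp
    rw [h4, h2, div_eq_mul_inv]
  have key2 : (2:ℂ)^(-(I*ζ)) * (2:ℂ)^(-(-(I*ζ))) = 1 := by
    rw [← Complex.cpow_add _ _ (by norm_num : (2:ℂ) ≠ 0)]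
    norm_num
  calc cfun m₁ m₂ (I*ζ) * cfun m₁ m₂ (-(I*ζ))
      = (Gamma (I*ζ) * Gamma (-(I*ζ))) * ((2:ℂ)^(-(I*ζ)) * (2:ℂ)^(-(-(I*ζ)))) *
        ((Gamma (((m₁:ℂ)/2 + 1 + I*ζ)/2))⁻¹ * (Gamma (((m₁:ℂ)/2 + (m₂:ℂ) + I*ζ)/2))⁻¹ *
         (Gamma (((m₁:ℂ)/2 + 1 + -(I*ζ))/2))⁻¹ * (Gamma (((m₁:ℂ)/2 + (m₂:ℂ) + -(I*ζ))/2))⁻¹) *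
        ((gfun m₁ m₂ ((rho m₁ m₂ : ℂ)))⁻¹)^2 := by
        simp only [cfun, gfun]
        ring
    _ = _ := by rw [key1, key2]; ring

lemma group3 {X Y Tv S d : ℂ} (hd : d ≠ 0) :
    Tv * (X/d) * (Y/d) * (d*S) = Tv*X*Y*S/d := by field_simp

lemma core (m₁ m₂ j k : ℕ) (hm₁ : 1 ≤ m₁)
    (hcase : (m₂ = 0 ∧ Odd m₁ ∧ j = 1) ∨ (Even m₁ ∧ Odd m₂ ∧ j = 2)) (ζ₀ : ℂ)
    (hIζ₀ : I * ζ₀ = -((m₁:ℂ)/2 + (m₂:ℂ) + (j:ℂ)*(k:ℂ))) :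
    ∃ L : ℂ, L ≠ 0 ∧ Tendsto (fun ζ : ℂ => cfun m₁ m₂ (I*ζ) * cfun m₁ m₂ (-(I*ζ)) / (ζ - ζ₀))
      (𝓝[≠] ζ₀) (𝓝 L) := by
  have hπ : (Real.pi:ℂ) ≠ 0 := ofReal_ne_zero.2 Real.pi_ne_zero
  have hm₁r : (0:ℝ) < m₁ := by exact_mod_cast hm₁
  have hμr : (0:ℝ) < (m₁:ℝ)/2 + m₂ + j*k := by positivity
  have hofreal : ((m₁:ℂ)/2 + (m₂:ℂ) + (j:ℂ)*(k:ℂ)) = (((m₁:ℝ)/2 + m₂ + j*k : ℝ) : ℂ) := by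
    push_cast; ring
  have hnegIζ₀ : -(I*ζ₀) = (((m₁:ℝ)/2 + m₂ + j*k : ℝ):ℂ) := by
    rw [← hofreal]; linear_combination -hIζ₀
  have hζ₀ne : ζ₀ ≠ 0 := by
    intro h
    rw [h, mul_zero, eq_comm, neg_eq_zero, hofreal] at hIζ₀
    exact (ne_of_gt hμr) (by exact_mod_cast hIζ₀)
  have hinvζ₀ : (-(I*ζ₀))⁻¹ ≠ 0 := by
    rw [hnegIζ₀]
    exact inv_ne_zero (by exact_mod_cast ne_of_gt hμr)
  -- constant Gamma factors
  have hAmarg : ((m₁:ℂ)/2 + 1 + -(I*ζ₀))/2 = ((((m₁:ℝ) + 1 + m₂ + j*k)/2 : ℝ):ℂ) := by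
    rw [hnegIζ₀]; push_cast; ring
  have hBmarg : ((m₁:ℂ)/2 + (m₂:ℂ) + -(I*ζ₀))/2 = ((((m₁:ℝ) + 2*m₂ + j*k)/2 : ℝ):ℂ) := by
    rw [hnegIζ₀]; push_cast; ring
  have hAmne : (Gamma (((m₁:ℂ)/2 + 1 + -(I*ζ₀))/2))⁻¹ ≠ 0 := by
    rw [hAmarg]
    exact inv_ne_zero (Gamma_ne_zero_of_re_pos (by rw [ofReal_re]; positivity))
  have hBmne : (Gamma (((m₁:ℂ)/2 + (m₂:ℂ) + -(I*ζ₀))/2))⁻¹ ≠ 0 := by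
    rw [hBmarg]
    exact inv_ne_zero (Gamma_ne_zero_of_re_pos (by rw [ofReal_re]; positivity))
  have hρr : (0:ℝ) < rho m₁ m₂ := by rw [rho]; positivity
  have hgρ : gfun m₁ m₂ ((rho m₁ m₂ : ℂ)) ≠ 0 := by
    rw [gfun]
    apply div_ne_zero
    · apply mul_ne_zero
      · exact Gamma_ne_zero_of_re_pos (by rw [ofReal_re]; exact hρr)
      · simp [Complex.cpow_eq_zero_iff]
    · apply mul_ne_zero
      · have : ((m₁:ℂ)/2 + 1 + (rho m₁ m₂ : ℂ))/2 = ((((m₁:ℝ)/2 + 1 + rho m₁ m₂)/2 : ℝ):ℂ) := by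
          push_cast; ring
        rw [this]
        exact Gamma_ne_zero_of_re_pos (by rw [ofReal_re]; positivity)
      · have : ((m₁:ℂ)/2 + (m₂:ℂ) + (rho m₁ m₂ : ℂ))/2 =
            ((((m₁:ℝ)/2 + m₂ + rho m₁ m₂)/2 : ℝ):ℂ) := by push_cast; ring
        rw [this]
        exact Gamma_ne_zero_of_re_pos (by rw [ofReal_re]; positivity)
  have hgρ2 : ((gfun m₁ m₂ ((rho m₁ m₂ : ℂ)))⁻¹)^2 ≠ 0 := pow_ne_zero 2 (inv_ne_zero hgρ)
  have hΓc : ∀ f : ℂ → ℂ, Continuous f → Continuous (fun ζ => (Gamma (f ζ))⁻¹) :=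
    fun f hf => Complex.differentiable_one_div_Gamma.continuous.comp hf
  have hI2 : (I/2 : ℂ) ≠ 0 := by simp [I_ne_zero]
  have hev0 : ∀ᶠ ζ in 𝓝[≠] ζ₀, ζ ≠ (0:ℂ) := eventually_ne_nhdsWithin hζ₀ne
  have hevne : ∀ᶠ ζ in 𝓝[≠] ζ₀, ζ ≠ ζ₀ := by
    filter_upwards [self_mem_nhdsWithin] with ζ hζ using hζ
  rcases hcase with ⟨hm2, ⟨t, ht⟩, hj⟩ | ⟨⟨u, hu⟩, ⟨v, hv⟩, hj⟩
  · -- Case 1 : m₂ = 0, m₁ odd, j = 1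
    have hm₁c : (m₁:ℂ) = 2*t+1 := by rw [ht]; push_cast; ring
    have hm₂c : (m₂:ℂ) = 0 := by rw [hm2]; norm_num
    have hjc : (j:ℂ) = 1 := by rw [hj]; norm_num
    have hsinne : Complex.sin ((Real.pi:ℂ)*(I*ζ₀)) ≠ 0 := by
      intro h
      obtain ⟨K, hK⟩ := Complex.sin_eq_zero_iff.1 h
      rw [hIζ₀] at hK
      have h2 : (((m₁ : ℤ) + 2*m₂ + 2*j*k + 2*K : ℤ):ℂ) * (Real.pi:ℂ) = 0 := by
        push_cast
        linear_combination (-2:ℂ)*hK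
      rcases mul_eq_zero.1 h2 with h3 | h3
      · have h4 : ((m₁ : ℤ) + 2*m₂ + 2*j*k + 2*K : ℤ) = 0 := by exact_mod_cast h3
        rw [hm2, hj] at h4
        omega
      · exact hπ h3
    have hsinC : ContinuousAt (fun ζ : ℂ => (Complex.sin ((Real.pi:ℂ)*(I*ζ)))⁻¹) ζ₀ :=
      ContinuousAt.inv₀ (by fun_prop) hsinne
    have hsinvne : (Complex.sin ((Real.pi:ℂ)*(I*ζ₀)))⁻¹ ≠ 0 := inv_ne_zero hsinne
    rcases Nat.even_or_odd k with ⟨s, hs⟩ | ⟨s, hs⟩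
    · -- k = s + s : zero from the B₊ factor
      have hkc : (k:ℂ) = 2*s := by rw [hs]; push_cast; ring
      have hB : Tendsto (fun ζ => (Gamma (((m₁:ℂ)/2 + (m₂:ℂ) + I*ζ)/2))⁻¹ / (ζ - ζ₀)) (𝓝[≠] ζ₀)
          (𝓝 ((I/2) * ((-1)^s * (Nat.factorial s : ℂ)))) := by
        apply tendsto_gammaInv_affine hI2 s
        intro ζ
        push_cast
        linear_combination ((1:ℂ)/2) * hIζ₀ - ((k:ℂ)/2)*hjc - (1/2)*hkc
      have hApne : (Gamma (((m₁:ℂ)/2 + 1 + I*ζ₀)/2))⁻¹ ≠ 0 := by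
        have harg : ((m₁:ℂ)/2 + 1 + I*ζ₀)/2 = (((1 - (k:ℝ))/2 : ℝ):ℂ) := by
          push_cast
          linear_combination ((1:ℂ)/2) * hIζ₀ - (1/2)*hm₂c - ((k:ℂ)/2)*hjc
        rw [harg]
        refine inv_ne_zero (Complex.Gamma_ne_zero fun m => ?_)
        intro hEq
        have h1 : (1 - (k:ℝ))/2 = -(m:ℝ) := by exact_mod_cast hEq
        have h2 : (1 : ℤ) - k = -(2*m) := by
          have : (1:ℝ) - k = -(2*m) := by linarith
          exact_mod_cast this
        omega
      set Tf : ℂ → ℂ := fun ζ => (Real.pi:ℂ) * (Complex.sin ((Real.pi:ℂ)*(I*ζ)))⁻¹ *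
          (-(I*ζ))⁻¹ * (Gamma (((m₁:ℂ)/2 + 1 + I*ζ)/2))⁻¹ *
          (Gamma (((m₁:ℂ)/2 + 1 + -(I*ζ))/2))⁻¹ *
          (Gamma (((m₁:ℂ)/2 + (m₂:ℂ) + -(I*ζ))/2))⁻¹ *
          ((gfun m₁ m₂ ((rho m₁ m₂ : ℂ)))⁻¹)^2 with hTf
      have hTc : ContinuousAt Tf ζ₀ := by
        apply ContinuousAt.mul
        apply ContinuousAt.mul
        apply ContinuousAt.mul
        apply ContinuousAt.mul
        apply ContinuousAt.mul
        · exact continuousAt_const.mul hsinC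
        · refine ContinuousAt.inv₀ (by fun_prop) ?_
          rw [hnegIζ₀]
          exact_mod_cast ne_of_gt hμr
        · exact (hΓc _ (by fun_prop)).continuousAt
        · exact (hΓc _ (by fun_prop)).continuousAt
        · exact (hΓc _ (by fun_prop)).continuousAt
        · exact continuousAt_const
      have hTne : Tf ζ₀ ≠ 0 :=
        mul_ne_zero (mul_ne_zero (mul_ne_zero (mul_ne_zero (mul_ne_zero
          (mul_ne_zero hπ hsinvne) hinvζ₀) hApne) hAmne) hBmne) hgρ2
      refine ⟨Tf ζ₀ * ((I/2) * ((-1)^s * (Nat.factorial s : ℂ))), ?_, ?_⟩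
      · exact mul_ne_zero hTne (mul_ne_zero hI2 (mul_ne_zero
          (pow_ne_zero _ (neg_ne_zero.2 one_ne_zero))
          (Nat.cast_ne_zero.2 (Nat.factorial_ne_zero _))))
      · have htend := (hTc.tendsto.mono_left nhdsWithin_le_nhds).mul hB
        refine htend.congr' ?_
        filter_upwards [hev0, hevne] with ζ h0 hne
        have hnum : cfun m₁ m₂ (I*ζ) * cfun m₁ m₂ (-(I*ζ)) =
            Tf ζ * (Gamma (((m₁:ℂ)/2 + (m₂:ℂ) + I*ζ)/2))⁻¹ := by
          rw [cfun_prod_eq m₁ m₂ ζ h0, hTf]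
          ring
        show Tf ζ * _ = _
        rw [hnum, mul_div_assoc]
    · -- k = 2*s + 1 : zero from the A₊ factor
      have hkc : (k:ℂ) = 2*s+1 := by rw [hs]; push_cast; ring
      have hA : Tendsto (fun ζ => (Gamma (((m₁:ℂ)/2 + 1 + I*ζ)/2))⁻¹ / (ζ - ζ₀)) (𝓝[≠] ζ₀)
          (𝓝 ((I/2) * ((-1)^s * (Nat.factorial s : ℂ)))) := by
        apply tendsto_gammaInv_affine hI2 s
        intro ζ
        push_cast
        linear_combination ((1:ℂ)/2) * hIζ₀ - (1/2)*hm₂c - ((k:ℂ)/2)*hjc - (1/2)*hkc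
      have hBpne : (Gamma (((m₁:ℂ)/2 + (m₂:ℂ) + I*ζ₀)/2))⁻¹ ≠ 0 := by
        have harg : ((m₁:ℂ)/2 + (m₂:ℂ) + I*ζ₀)/2 = ((-(k:ℝ)/2 : ℝ):ℂ) := by
          push_cast
          linear_combination ((1:ℂ)/2) * hIζ₀ - ((k:ℂ)/2)*hjc
        rw [harg]
        refine inv_ne_zero (Complex.Gamma_ne_zero fun m => ?_)
        intro hEq
        have h1 : -(k:ℝ)/2 = -(m:ℝ) := by exact_mod_cast hEq
        have h2 : (k : ℤ) = 2*m := by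
          have : (k:ℝ) = 2*m := by linarith
          exact_mod_cast this
        omega
      set Tf : ℂ → ℂ := fun ζ => (Real.pi:ℂ) * (Complex.sin ((Real.pi:ℂ)*(I*ζ)))⁻¹ *
          (-(I*ζ))⁻¹ * (Gamma (((m₁:ℂ)/2 + (m₂:ℂ) + I*ζ)/2))⁻¹ *
          (Gamma (((m₁:ℂ)/2 + 1 + -(I*ζ))/2))⁻¹ *
          (Gamma (((m₁:ℂ)/2 + (m₂:ℂ) + -(I*ζ))/2))⁻¹ *
          ((gfun m₁ m₂ ((rho m₁ m₂ : ℂ)))⁻¹)^2 with hTf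
      have hTc : ContinuousAt Tf ζ₀ := by
        apply ContinuousAt.mul
        apply ContinuousAt.mul
        apply ContinuousAt.mul
        apply ContinuousAt.mul
        apply ContinuousAt.mul
        · exact continuousAt_const.mul hsinC
        · refine ContinuousAt.inv₀ (by fun_prop) ?_
          rw [hnegIζ₀]
          exact_mod_cast ne_of_gt hμr
        · exact (hΓc _ (by fun_prop)).continuousAt
        · exact (hΓc _ (by fun_prop)).continuousAt
        · exact (hΓc _ (by fun_prop)).continuousAt
        · exact continuousAt_const
      have hTne : Tf ζ₀ ≠ 0 :=
        mul_ne_zero (mul_ne_zero (mul_ne_zero (mul_ne_zero (mul_ne_zero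
          (mul_ne_zero hπ hsinvne) hinvζ₀) hBpne) hAmne) hBmne) hgρ2
      refine ⟨Tf ζ₀ * ((I/2) * ((-1)^s * (Nat.factorial s : ℂ))), ?_, ?_⟩
      · exact mul_ne_zero hTne (mul_ne_zero hI2 (mul_ne_zero
          (pow_ne_zero _ (neg_ne_zero.2 one_ne_zero))
          (Nat.cast_ne_zero.2 (Nat.factorial_ne_zero _))))
      · have htend := (hTc.tendsto.mono_left nhdsWithin_le_nhds).mul hA
        refine htend.congr' ?_
        filter_upwards [hev0, hevne] with ζ h0 hne
        have hnum : cfun m₁ m₂ (I*ζ) * cfun m₁ m₂ (-(I*ζ)) =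
            Tf ζ * (Gamma (((m₁:ℂ)/2 + 1 + I*ζ)/2))⁻¹ := by
          rw [cfun_prod_eq m₁ m₂ ζ h0, hTf]
          ring
        show Tf ζ * _ = _
        rw [hnum, mul_div_assoc]
  · -- Case 2 : m₁ even, m₂ odd, j = 2
    have hm₁c : (m₁:ℂ) = 2*u := by rw [hu]; push_cast; ring
    have hm₂c : (m₂:ℂ) = 2*v+1 := by rw [hv]; push_cast; ring
    have hjc : (j:ℂ) = 2 := by rw [hj]; norm_num
    have hA : Tendsto (fun ζ => (Gamma (((m₁:ℂ)/2 + 1 + I*ζ)/2))⁻¹ / (ζ - ζ₀)) (𝓝[≠] ζ₀)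
        (𝓝 ((I/2) * ((-1)^(v+k) * (Nat.factorial (v+k) : ℂ)))) := by
      apply tendsto_gammaInv_affine hI2 (v+k)
      intro ζ
      push_cast
      linear_combination ((1:ℂ)/2) * hIζ₀ - (1/2)*hm₂c - ((k:ℂ)/2)*hjc
    have hB : Tendsto (fun ζ => (Gamma (((m₁:ℂ)/2 + (m₂:ℂ) + I*ζ)/2))⁻¹ / (ζ - ζ₀)) (𝓝[≠] ζ₀)
        (𝓝 ((I/2) * ((-1)^k * (Nat.factorial k : ℂ)))) := by
      apply tendsto_gammaInv_affine hI2 k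
      intro ζ
      push_cast
      linear_combination ((1:ℂ)/2) * hIζ₀ - ((k:ℂ)/2)*hjc
    have hNc : (Real.pi:ℂ) * (I*ζ₀) = ((-(u + 2*v + 1 + 2*k : ℤ) : ℤ):ℂ) * (Real.pi:ℂ) := by
      rw [hIζ₀]
      push_cast
      linear_combination (-(Real.pi:ℂ)/2)*hm₁c - (Real.pi:ℂ)*hm₂c - (Real.pi:ℂ)*(k:ℂ)*hjc
    have hf0 : Complex.sin ((Real.pi:ℂ)*(I*ζ₀)) = 0 :=
      Complex.sin_eq_zero_iff.2 ⟨-(u + 2*v + 1 + 2*k : ℤ), hNc⟩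
    have hinner : HasDerivAt (fun ζ : ℂ => (Real.pi:ℂ)*(I*ζ)) ((Real.pi:ℂ)*I) ζ₀ := by
      have h := (hasDerivAt_id ζ₀).const_mul ((Real.pi:ℂ)*I)
      simpa [mul_assoc] using h
    have hsin' : HasDerivAt (fun ζ : ℂ => Complex.sin ((Real.pi:ℂ)*(I*ζ)))
        (Complex.cos ((Real.pi:ℂ)*(I*ζ₀)) * ((Real.pi:ℂ)*I)) ζ₀ :=
      (Complex.hasDerivAt_sin _).comp ζ₀ hinner
    have hcos : Complex.cos ((Real.pi:ℂ)*(I*ζ₀)) ≠ 0 := by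
      intro h
      obtain ⟨K, hK⟩ := Complex.cos_eq_zero_iff.1 h
      rw [hNc] at hK
      have h2 : ((-2*(u + 2*v + 1 + 2*k : ℤ) : ℤ):ℂ) * (Real.pi:ℂ) = ((2*K+1 : ℤ):ℂ) * (Real.pi:ℂ) := by
        push_cast
        push_cast at hK
        linear_combination 2*hK
      have h3 := mul_right_cancel₀ hπ h2
      have h4 : (-2*(u + 2*v + 1 + 2*k : ℤ) : ℤ) = (2*K+1 : ℤ) := by exact_mod_cast h3
      omega
    have hdne : Complex.cos ((Real.pi:ℂ)*(I*ζ₀)) * ((Real.pi:ℂ)*I) ≠ 0 :=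
      mul_ne_zero hcos (mul_ne_zero hπ I_ne_zero)
    have hsin := tendsto_sub_mul_inv hsin' hf0 hdne
    set Tf : ℂ → ℂ := fun ζ => (Real.pi:ℂ) * (-(I*ζ))⁻¹ *
        (Gamma (((m₁:ℂ)/2 + 1 + -(I*ζ))/2))⁻¹ *
        (Gamma (((m₁:ℂ)/2 + (m₂:ℂ) + -(I*ζ))/2))⁻¹ *
        ((gfun m₁ m₂ ((rho m₁ m₂ : ℂ)))⁻¹)^2 with hTf
    have hTc : ContinuousAt Tf ζ₀ := by
      apply ContinuousAt.mul
      apply ContinuousAt.mul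
      apply ContinuousAt.mul
      · refine continuousAt_const.mul (ContinuousAt.inv₀ (by fun_prop) ?_)
        rw [hnegIζ₀]
        exact_mod_cast ne_of_gt hμr
      · exact (hΓc _ (by fun_prop)).continuousAt
      · exact (hΓc _ (by fun_prop)).continuousAt
      · exact continuousAt_const
    have hTne : Tf ζ₀ ≠ 0 :=
      mul_ne_zero (mul_ne_zero (mul_ne_zero (mul_ne_zero hπ hinvζ₀) hAmne) hBmne) hgρ2
    refine ⟨Tf ζ₀ * ((I/2) * ((-1)^(v+k) * (Nat.factorial (v+k):ℂ))) *
      ((I/2) * ((-1)^k * (Nat.factorial k : ℂ))) *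
      (Complex.cos ((Real.pi:ℂ)*(I*ζ₀)) * ((Real.pi:ℂ)*I))⁻¹, ?_, ?_⟩
    · refine mul_ne_zero (mul_ne_zero (mul_ne_zero hTne ?_) ?_) (inv_ne_zero hdne)
      · exact mul_ne_zero hI2 (mul_ne_zero (pow_ne_zero _ (neg_ne_zero.2 one_ne_zero))
          (Nat.cast_ne_zero.2 (Nat.factorial_ne_zero _)))
      · exact mul_ne_zero hI2 (mul_ne_zero (pow_ne_zero _ (neg_ne_zero.2 one_ne_zero))
          (Nat.cast_ne_zero.2 (Nat.factorial_ne_zero _)))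
    · have htend := (((hTc.tendsto.mono_left nhdsWithin_le_nhds).mul hA).mul hB).mul hsin
      refine htend.congr' ?_
      filter_upwards [hev0, hevne] with ζ h0 hne
      have hd : ζ - ζ₀ ≠ 0 := sub_ne_zero.2 hne
      have hnum : cfun m₁ m₂ (I*ζ) * cfun m₁ m₂ (-(I*ζ)) =
          Tf ζ * (Gamma (((m₁:ℂ)/2 + 1 + I*ζ)/2))⁻¹ *
            (Gamma (((m₁:ℂ)/2 + (m₂:ℂ) + I*ζ)/2))⁻¹ *
            (Complex.sin ((Real.pi:ℂ)*(I*ζ)))⁻¹ := by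
        rw [cfun_prod_eq m₁ m₂ ζ h0, hTf]
        ring
      show Tf ζ * _ * _ * _ = _
      rw [group3 hd, hnum]

theorem cProduct_zeros_simple (m₁ m₂ : ℕ) (hm₁ : 1 ≤ m₁) (j : ℕ)
    (hcase : (m₂ = 0 ∧ Odd m₁ ∧ j = 1) ∨ (Even m₁ ∧ Odd m₂ ∧ j = 2))
    (k : ℕ) (ζ₀ : ℂ)
    (hζ₀ : ζ₀ = Complex.I * ((rho m₁ m₂ : ℂ) + (j : ℂ) * (k : ℂ))
        ∨ ζ₀ = -(Complex.I * ((rho m₁ m₂ : ℂ) + (j : ℂ) * (k : ℂ)))) :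
    ∃ L : ℂ, L ≠ 0 ∧
      Filter.Tendsto
        (fun ζ : ℂ =>
          cfun m₁ m₂ (Complex.I * ζ) * cfun m₁ m₂ (-(Complex.I * ζ)) / (ζ - ζ₀))
        (nhdsWithin ζ₀ {ζ₀}ᶜ) (nhds L) := by
  have hIζp : Complex.I * (Complex.I * ((rho m₁ m₂ : ℂ) + (j : ℂ) * (k : ℂ))) =
      -((m₁:ℂ)/2 + (m₂:ℂ) + (j:ℂ)*(k:ℂ)) := by
    simp only [rho]
    push_cast
    linear_combination (((m₁:ℂ)/2 + (m₂:ℂ) + (j:ℂ)*(k:ℂ))) * Complex.I_mul_I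
  have heven : ∀ ζ : ℂ, cfun m₁ m₂ (Complex.I * (-ζ)) * cfun m₁ m₂ (-(Complex.I * (-ζ))) =
      cfun m₁ m₂ (Complex.I * ζ) * cfun m₁ m₂ (-(Complex.I * ζ)) := by
    intro ζ
    rw [mul_neg, neg_neg, mul_comm]
  obtain ⟨L, hL, hT⟩ := core m₁ m₂ j k hm₁ hcase
    (Complex.I * ((rho m₁ m₂ : ℂ) + (j : ℂ) * (k : ℂ))) hIζp
  rcases hζ₀ with h | h
  · subst h
    exact ⟨L, hL, hT⟩
  · subst h
    exact ⟨-L, neg_ne_zero.2 hL, tendsto_neg_reduce heven hT⟩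

end Helpers

end
end

section
/- Let k, N ∈ ℕ with N ≤ k, let s ∈ ℂ with Re s > −N, and let u : ℝ → ℂ be k times continuously differentiable (ContDiff ℝ k u) with u(y) = 0 for all y outside the interval [0,1]. Define v : ℝ → ℂ by v(y) = y^s·u(y) for y > 0 (where y^s is the complex power of the positive real y) and v(y) = 0 for y ≤ 0. Then v is (k − N) times continuously differentiable on ℝ (ContDiff ℝ (k−N) v). -/
/-!
Induction on the order of smoothness. A `Cⁿ` function vanishing on `(-∞, 0]` is `O(yⁿ)` at
`0⁺` (iterated mean value theorem), so `y₊ ^ s * u` tends to `0` at `0` as soon as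
`Re s + n > 0`. Its difference quotient at `0` is `y₊ ^ (s - 1) * u`, hence it is differentiable
with derivative `s * y₊ ^ (s - 1) * u + y₊ ^ s * u'`, and both terms are of the same shape with
`(s - 1, N + 1)` resp. `(s, N)` in place of `(s, N)` and one order of smoothness less.
-/

open Set Filter Topology

theorem forall_le_eq_zero_of_forall_lt {X : Type*} [TopologicalSpace X] [T2Space X] [Zero X]
    {u : ℝ → X} {a : ℝ} (hu : Continuous u) (h : ∀ y < a, u y = 0) : ∀ y ≤ a, u y = 0 :=
  fun _ hy => Set.EqOn.of_subset_closure (s := Iio a) (f := u) (g := 0) h hu.continuousOn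
    continuousOn_const Iio_subset_Iic_self (closure_Iio a).ge hy

section Vanishing

variable {E : Type*} [NormedAddCommGroup E] [NormedSpace ℝ E] {u : ℝ → E}

theorem deriv_eq_zero_of_forall_nonpos (hu : Continuous (deriv u))
    (h0 : ∀ y ≤ (0 : ℝ), u y = 0) : ∀ y ≤ (0 : ℝ), deriv u y = 0 := by
  refine forall_le_eq_zero_of_forall_lt hu fun y hy => ?_
  have : u =ᶠ[𝓝 y] 0 := eventually_of_mem (Iio_mem_nhds hy) fun z hz => h0 z hz.le
  simp [this.deriv_eq]

theorem exists_norm_le_mul_pow_of_forall_nonpos (n : ℕ) (hu : ContDiff ℝ n u)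
    (h0 : ∀ y ≤ (0 : ℝ), u y = 0) :
    ∃ C, 0 ≤ C ∧ ∀ y ∈ Icc (0 : ℝ) 1, ‖u y‖ ≤ C * y ^ n := by
  induction n generalizing u with
  | zero =>
    obtain ⟨C, hC⟩ := isCompact_Icc.exists_bound_of_continuousOn hu.continuous.continuousOn
    exact ⟨max C 0, le_max_right _ _, fun y hy => by
      simpa using (hC y hy).trans (le_max_left C 0)⟩
  | succ n ih =>
    rw [Nat.cast_add_one, contDiff_succ_iff_deriv] at hu
    obtain ⟨hdiff, -, hu'⟩ := hu
    obtain ⟨C, hC0, hC⟩ := ih hu' (deriv_eq_zero_of_forall_nonpos hu'.continuous h0)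
    refine ⟨C, hC0, fun y ⟨hy0, hy1⟩ => ?_⟩
    have hmvt := norm_image_sub_le_of_norm_deriv_le_segment' (C := C * y ^ n)
      (fun t _ => (hdiff t).hasDerivAt.hasDerivWithinAt)
      (fun t ht => (hC t ⟨ht.1, ht.2.le.trans hy1⟩).trans <| by gcongr; exacts [ht.1, ht.2.le])
      y (right_mem_Icc.2 hy0)
    rw [h0 0 le_rfl, sub_zero, sub_zero] at hmvt
    simpa [pow_succ, mul_assoc] using hmvt

end Vanishing

/-- Multiplication by `y₊ ^ s`. -/
noncomputable def cpowPosMul (s : ℂ) (u : ℝ → ℂ) (y : ℝ) : ℂ :=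
  if 0 < y then (y : ℂ) ^ s * u y else 0

section CpowPosMul

variable {s : ℂ} {u : ℝ → ℂ}

theorem cpowPosMul_of_nonpos {y : ℝ} (hy : y ≤ 0) : cpowPosMul s u y = 0 :=
  if_neg hy.not_gt

theorem cpowPosMul_eventuallyEq_zero_of_neg {x : ℝ} (hx : x < 0) :
    cpowPosMul s u =ᶠ[𝓝 x] 0 :=
  eventually_of_mem (Iio_mem_nhds hx) fun _ hy => cpowPosMul_of_nonpos hy.le

theorem cpowPosMul_eventuallyEq_of_pos {x : ℝ} (hx : 0 < x) :
    cpowPosMul s u =ᶠ[𝓝 x] fun y => (y : ℂ) ^ s * u y :=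
  eventually_of_mem (Ioi_mem_nhds hx) fun _ hy => if_pos hy

theorem slope_cpowPosMul_zero : slope (cpowPosMul s u) 0 = cpowPosMul (s - 1) u := by
  ext y
  rcases le_or_gt y 0 with hy | hy
  · simp [slope, cpowPosMul_of_nonpos hy, cpowPosMul_of_nonpos le_rfl]
  · have hy' : (y : ℂ) ≠ 0 := by exact_mod_cast hy.ne'
    simp [slope, cpowPosMul, hy, Complex.cpow_sub _ _ hy', div_eq_inv_mul, mul_assoc]

theorem norm_cpowPosMul_le {C : ℝ} {n : ℕ} (hC : 0 ≤ C)
    (hu : ∀ y ∈ Icc (0 : ℝ) 1, ‖u y‖ ≤ C * y ^ n) {y : ℝ} (hy : y ≤ 1) :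
    ‖cpowPosMul s u y‖ ≤ C * |y| ^ (s.re + n) := by
  rcases le_or_gt y 0 with hy0 | hy0
  · rw [cpowPosMul_of_nonpos hy0, norm_zero]; positivity
  calc ‖cpowPosMul s u y‖ = y ^ s.re * ‖u y‖ := by
        rw [cpowPosMul, if_pos hy0, norm_mul, Complex.norm_cpow_eq_rpow_re_of_pos hy0]
    _ ≤ y ^ s.re * (C * y ^ n) := by gcongr; exact hu y ⟨hy0.le, hy⟩
    _ = C * |y| ^ (s.re + n) := by
        rw [abs_of_pos hy0, Real.rpow_add hy0, Real.rpow_natCast]; ring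

theorem tendsto_cpowPosMul_nhds_zero {n : ℕ} (hu : ContDiff ℝ n u)
    (h0 : ∀ y ≤ (0 : ℝ), u y = 0) (hs : 0 < s.re + n) :
    Tendsto (cpowPosMul s u) (𝓝 0) (𝓝 0) := by
  obtain ⟨C, hC0, hC⟩ := exists_norm_le_mul_pow_of_forall_nonpos n hu h0
  have hpow : Tendsto (fun y : ℝ => C * |y| ^ (s.re + n)) (𝓝 0) (𝓝 0) := by
    have : Continuous (fun y : ℝ => C * |y| ^ (s.re + n)) :=
      continuous_const.mul (continuous_abs.rpow_const fun _ => Or.inr hs.le)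
    simpa [Real.zero_rpow hs.ne'] using this.tendsto 0
  refine squeeze_zero_norm' ?_ hpow
  filter_upwards [Iic_mem_nhds one_pos] with y hy using norm_cpowPosMul_le hC0 hC hy

theorem continuous_cpowPosMul {n : ℕ} (hu : ContDiff ℝ n u) (h0 : ∀ y ≤ (0 : ℝ), u y = 0)
    (hs : 0 < s.re + n) : Continuous (cpowPosMul s u) := by
  refine continuous_iff_continuousAt.2 fun x => ?_
  rcases lt_trichotomy x 0 with hx | rfl | hx
  · exact continuousAt_const.congr (cpowPosMul_eventuallyEq_zero_of_neg hx).symm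
  · simpa [ContinuousAt, cpowPosMul_of_nonpos le_rfl] using
      tendsto_cpowPosMul_nhds_zero hu h0 hs
  · refine ContinuousAt.congr ?_ (cpowPosMul_eventuallyEq_of_pos hx).symm
    exact (Complex.continuousAt_ofReal_cpow_const x s (Or.inr hx.ne')).mul
      hu.continuous.continuousAt

theorem hasDerivAt_cpowPosMul {n : ℕ} (hu : ContDiff ℝ (n + 1 : ℕ) u)
    (h0 : ∀ y ≤ (0 : ℝ), u y = 0) (hs : 0 < s.re + n) (x : ℝ) :
    HasDerivAt (cpowPosMul s u) (s * cpowPosMul (s - 1) u x + cpowPosMul s (deriv u) x) x := by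
  rcases lt_trichotomy x 0 with hx | rfl | hx
  · simpa [cpowPosMul_of_nonpos hx.le] using
      (hasDerivAt_const x 0).congr_of_eventuallyEq (cpowPosMul_eventuallyEq_zero_of_neg hx)
  · simp only [cpowPosMul_of_nonpos le_rfl, mul_zero, add_zero, hasDerivAt_iff_tendsto_slope,
      slope_cpowPosMul_zero]
    refine (tendsto_cpowPosMul_nhds_zero hu h0 ?_).mono_left nhdsWithin_le_nhds
    push_cast [Complex.sub_re, Complex.one_re]
    linarith
  · have hpow := (Complex.hasStrictDerivAt_cpow_const (c := s)
      (Complex.ofReal_mem_slitPlane.2 hx)).hasDerivAt.comp_ofReal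
    have hu' := (hu.differentiable (by simp) x).hasDerivAt
    simpa [cpowPosMul, hx, mul_assoc] using
      (hpow.mul hu').congr_of_eventuallyEq (cpowPosMul_eventuallyEq_of_pos hx)

theorem contDiff_cpowPosMul (m N : ℕ) (hs : -(N : ℝ) < s.re) (hu : ContDiff ℝ (N + m : ℕ) u)
    (h0 : ∀ y ≤ (0 : ℝ), u y = 0) : ContDiff ℝ m (cpowPosMul s u) := by
  induction m generalizing N s u with
  | zero => exact contDiff_zero.2 (continuous_cpowPosMul (n := N) hu h0 (by linarith))
  | succ m ih =>
    have hu1 : ContDiff ℝ (N + 1 : ℕ) u := hu.of_le (by exact_mod_cast by omega)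
    have hu' : ContDiff ℝ (N + m : ℕ) (deriv u) := by
      rw [← add_assoc, Nat.cast_add_one, contDiff_succ_iff_deriv] at hu
      exact hu.2.2
    have hderiv x := hasDerivAt_cpowPosMul hu1 h0 (by linarith) x
    rw [Nat.cast_add_one, contDiff_succ_iff_deriv, funext fun x => (hderiv x).deriv]
    refine ⟨fun x => (hderiv x).differentiableAt, by simp, (contDiff_const.mul ?_).add ?_⟩
    · refine ih (N + 1) ?_ (by rwa [add_right_comm]) h0
      push_cast [Complex.sub_re, Complex.one_re]
      linarith
    · exact ih N hs hu' (deriv_eq_zero_of_forall_nonpos hu'.continuous h0)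

end CpowPosMul

theorem cpow_mul_contDiff (k N : ℕ) (hN : N ≤ k) (s : ℂ) (hs : -(N : ℝ) < s.re)
    (u : ℝ → ℂ) (hu : ContDiff ℝ k u)
    (hsupp : ∀ y : ℝ, y ∉ Set.Icc (0 : ℝ) 1 → u y = 0) :
    ContDiff ℝ (k - N : ℕ) (fun y : ℝ => if 0 < y then (y : ℂ) ^ s * u y else 0) := by
  have h0 : ∀ y ≤ (0 : ℝ), u y = 0 :=
    forall_le_eq_zero_of_forall_lt hu.continuous fun y hy => hsupp y fun h => hy.not_ge h.1
  exact contDiff_cpowPosMul (k - N) N hs (by rwa [Nat.add_sub_cancel' hN]) h0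
end
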